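/- For all real x ≥ 0, ∫ from x to x+1 of log Γ(u) du = x·log x − x + (1/2)·log(2π), where for x = 0 the term x·log x is interpreted as 0. -/

import Mathlib

/-!
Put `F x = ∫ u in x..x + 1, log (Gamma u)`. The recurrence `log Γ(u + 1) = log Γ(u) + log u`
turns `F x - F 0` into `∫ u in 0..x, log u = x log x - x`. For the constant `F 0`, Euler's
reflection formula `Γ(u) Γ(1 - u) = π / sin (π u)` and the symmetry `u ↦ 1 - u` of `[0, 1]` give
`2 F 0 = log π - ∫ u in 0..1, log (sin (π u)) = log π + log 2`.
-/

open Real intervalIntegral Set MeasureTheory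

theorem integral_add_one_sub_integral_add_one {f : ℝ → ℝ} {a b : ℝ} (hab : a ≤ b)
    (hf : IntervalIntegrable f volume a (b + 1)) :
    (∫ u in b..b + 1, f u) - ∫ u in a..a + 1, f u = ∫ u in a..b, (f (u + 1) - f u) := by
  have hsub : ∀ c ∈ Icc a (b + 1), ∀ d ∈ Icc a (b + 1), IntervalIntegrable f volume c d :=
    fun c hc d hd => hf.mono_set <| uIcc_subset_uIcc
      (by rwa [uIcc_of_le (by linarith)]) (by rwa [uIcc_of_le (by linarith)])
  have hshift : IntervalIntegrable (fun u => f (u + 1)) volume a b := by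
    simpa using
      (hsub (a + 1) ⟨by linarith, by linarith⟩ (b + 1) ⟨by linarith, by linarith⟩).comp_add_right 1
  rw [integral_interval_sub_interval_comm'
      (hsub b ⟨by linarith, by linarith⟩ (b + 1) ⟨by linarith, by linarith⟩)
      (hsub a ⟨by linarith, by linarith⟩ (a + 1) ⟨by linarith, by linarith⟩)
      (hsub b ⟨by linarith, by linarith⟩ a ⟨by linarith, by linarith⟩),
    integral_sub hshift (hsub a ⟨by linarith, by linarith⟩ b ⟨by linarith, by linarith⟩),
    integral_comp_add_right]

namespace Real

-- At `u = 0` both sides vanish, since `Gamma 0 = 0` and `log 0 = 0`.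
theorem log_Gamma_add_one {u : ℝ} (hu : 0 ≤ u) :
    log (Gamma (u + 1)) = log (Gamma u) + log u := by
  rcases hu.eq_or_lt with rfl | hu
  · simp
  · rw [Gamma_add_one hu.ne', log_mul hu.ne' (Gamma_pos_of_pos hu).ne', add_comm]

theorem intervalIntegrable_log_Gamma {a b : ℝ} (ha : 0 ≤ a) (hb : 0 ≤ b) :
    IntervalIntegrable (fun u => log (Gamma u)) volume a b := by
  have hpos : ∀ u ∈ uIcc a b, 0 ≤ u := fun u hu => (le_min ha hb).trans hu.1
  have hcont : ContinuousOn (fun u => log (Gamma (u + 1))) (uIcc a b) :=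
    (convexOn_log_Gamma.continuousOn isOpen_Ioi).comp (continuousOn_id.add continuousOn_const)
      fun u hu => show (0 : ℝ) < u + 1 by linarith [hpos u hu]
  refine (hcont.intervalIntegrable.sub intervalIntegrable_log').congr_uIoo fun u hu => ?_
  show log (Gamma (u + 1)) - log u = log (Gamma u)
  rw [log_Gamma_add_one (hpos u (uIoo_subset_uIcc_self hu))]
  ring

theorem log_Gamma_add_log_Gamma_one_sub {u : ℝ} (h0 : 0 < u) (h1 : u < 1) :
    log (Gamma u) + log (Gamma (1 - u)) = log π - log (sin (π * u)) := by
  have hsin : 0 < sin (π * u) := sin_pos_of_pos_of_lt_pi (by positivity) (by nlinarith [pi_pos])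
  rw [← log_mul (Gamma_pos_of_pos h0).ne' (Gamma_pos_of_pos (by linarith)).ne',
    Gamma_mul_Gamma_one_sub, log_div pi_ne_zero hsin.ne']

theorem integral_log_sin_pi_mul : ∫ u in (0 : ℝ)..1, log (sin (π * u)) = -log 2 := by
  rw [integral_comp_mul_left (fun u => log (sin u)) pi_ne_zero, mul_zero, mul_one,
    integral_log_sin_zero_pi, smul_eq_mul]
  field_simp

theorem integral_log_Gamma_zero_one :
    ∫ u in (0 : ℝ)..1, log (Gamma u) = log (2 * π) / 2 := by
  have hint := intervalIntegrable_log_Gamma le_rfl zero_le_one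
  have hsymm : ∫ u in (0 : ℝ)..1, log (Gamma (1 - u)) = ∫ u in (0 : ℝ)..1, log (Gamma u) := by
    simp [integral_comp_sub_left (fun u => log (Gamma u))]
  have hlogsin : IntervalIntegrable (fun u => log (sin (π * u))) volume 0 1 := by
    simpa [pi_ne_zero] using (intervalIntegrable_log_sin (a := 0) (b := π)).comp_mul_left (c := π)
  have hdouble : 2 * ∫ u in (0 : ℝ)..1, log (Gamma u) = log π + log 2 :=
    calc 2 * ∫ u in (0 : ℝ)..1, log (Gamma u)
        = ∫ u in (0 : ℝ)..1, (log (Gamma u) + log (Gamma (1 - u))) := by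
          rw [intervalIntegral.integral_add hint (by simpa using hint.symm.comp_sub_left 1), hsymm]
          ring
      _ = ∫ u in (0 : ℝ)..1, (log π - log (sin (π * u))) :=
          integral_congr_Ioo_of_le zero_le_one fun u hu =>
            log_Gamma_add_log_Gamma_one_sub hu.1 hu.2
      _ = log π + log 2 := by
          rw [intervalIntegral.integral_sub intervalIntegrable_const hlogsin,
            intervalIntegral.integral_const, integral_log_sin_pi_mul]
          simp
  rw [log_mul two_ne_zero pi_ne_zero]
  linarith

theorem integral_log_Gamma_add_one_sub {x : ℝ} (hx : 0 ≤ x) :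
    (∫ u in x..x + 1, log (Gamma u)) - ∫ u in (0 : ℝ)..1, log (Gamma u) = x * log x - x := by
  have hshift := integral_add_one_sub_integral_add_one hx
    (intervalIntegrable_log_Gamma le_rfl (by linarith : (0 : ℝ) ≤ x + 1))
  rw [zero_add] at hshift
  rw [hshift, integral_congr fun u hu => ?_, integral_log]
  · simp
  · rw [log_Gamma_add_one (by rw [uIcc_of_le hx] at hu; exact hu.1)]
    ring

end Real

theorem stmt_8 (x : ℝ) (hx : 0 ≤ x) :
    ∫ u in x..(x + 1), Real.log (Real.Gamma u) =
      x * Real.log x - x + (1/2) * Real.log (2 * Real.pi) := by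
  linarith [integral_log_Gamma_add_one_sub hx, integral_log_Gamma_zero_one]
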